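/- Every fixed point free element f of PL⁺(ℝ) can be written as f = g ∘ h where g and h belong to PL⁺(ℝ) and each of g and h is reversible in PL⁺(ℝ) (i.e., each is conjugated to its inverse by some element of PL⁺(ℝ)). -/

import Mathlib

/-- `f` is a homeomorphism of `ℝ`: a bijection of `ℝ` that is continuous in both directions. -/
def IsHomeo (f : Equiv.Perm ℝ) : Prop := Continuous f ∧ Continuous f.symm

/-- `f` is locally affine at `x`: it agrees with an affine map on a neighbourhood of `x`. -/
def IsLocallyAffineAt (f : ℝ → ℝ) (x : ℝ) : Prop :=
  ∃ a b : ℝ, ∀ᶠ y in nhds x, f y = a * y + b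

/-- Membership in PLF(ℝ): a homeomorphism of `ℝ` that is locally affine at all but
finitely many points. -/
def InPLF (f : Equiv.Perm ℝ) : Prop :=
  IsHomeo f ∧ {x : ℝ | ¬ IsLocallyAffineAt (⇑f) x}.Finite

/-- Membership in PL(ℝ): a homeomorphism of `ℝ` whose set of points of non-local-affinity
has no accumulation point in `ℝ`. -/
def InPL (f : Equiv.Perm ℝ) : Prop :=
  IsHomeo f ∧ ∀ x : ℝ, ¬ AccPt x (Filter.principal {y : ℝ | ¬ IsLocallyAffineAt (⇑f) y})

/-!
A fixed point free `f ∈ PL⁺(ℝ)` lies strictly above or strictly below the identity, and replacing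
`f` by `f⁻¹` we may assume `x < f x`. Transporting the affine chart `[0, 1) → [0, f 0)` along the
orbit of `0` gives an element of `PL⁺(ℝ)` conjugating the translation `T : x ↦ x + 1/4` to `f`,
so it suffices to factor `T`.

For that we use two explicit `1`-periodic maps `G` and `K` in `PL⁺(ℝ)`, with slopes `1/2, 2, 1/2`
and `1/7, 7, 1/7` on each period, satisfying `G ∘ K ∘ G = K` and `G (-x) = 1/4 - G x`. The first
identity says that `K` reverses `G`. The second says that conjugating by `x ↦ -x` turns `G⁻¹`
into `G⁻¹ ∘ T`, which is therefore reversed by the increasing map `x ↦ -K (-x)`. Hence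
`T = G ∘ (G⁻¹ ∘ T)` is a product of two reversible elements.
-/

open Filter Set Topology Function

section Codiscrete

variable {X Y : Type*} [TopologicalSpace X] [TopologicalSpace Y]

lemma eventually_codiscrete_iff {p : X → Prop} :
    (∀ᶠ y in codiscrete X, p y) ↔ ∀ x, ∀ᶠ y in 𝓝[≠] x, p y := by
  simp only [Filter.Eventually, mem_codiscrete, disjoint_principal_right, compl_compl]

lemma Continuous.tendsto_codiscrete {g : X → Y} (hg : Continuous g) (hinj : Injective g) :
    Tendsto g (codiscrete X) (codiscrete Y) := by
  simp only [codiscrete, codiscreteWithin, mem_univ, iSup_pos, tendsto_iSup]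
  intro x
  refine (hg.continuousWithinAt.tendsto_nhdsWithin fun y hy => ?_).mono_right
    (le_iSup_of_le (g x) le_rfl)
  exact ⟨trivial, fun h => hy.2 (hinj h)⟩

end Codiscrete

section LocallyAffine

variable {f g : ℝ → ℝ} {x : ℝ}

lemma IsLocallyAffineAt.congr (h : IsLocallyAffineAt f x) (hfg : f =ᶠ[𝓝 x] g) :
    IsLocallyAffineAt g x := by
  obtain ⟨a, b, hab⟩ := h
  exact ⟨a, b, hfg.symm.trans hab⟩

lemma IsLocallyAffineAt.continuousAt (h : IsLocallyAffineAt f x) : ContinuousAt f x := by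
  obtain ⟨a, b, hab⟩ := h
  exact (continuous_const.mul continuous_id |>.add continuous_const).continuousAt.congr
    (EventuallyEq.symm hab)

lemma IsLocallyAffineAt.comp (hf : IsLocallyAffineAt f (g x)) (hg : IsLocallyAffineAt g x) :
    IsLocallyAffineAt (f ∘ g) x := by
  have hgc := hg.continuousAt
  obtain ⟨a, b, hab⟩ := hg
  obtain ⟨c, d, hcd⟩ := hf
  refine ⟨c * a, c * b + d, ?_⟩
  filter_upwards [hab, hgc.eventually hcd] with y hy hy'
  rw [comp_apply, hy', hy]
  ring

end LocallyAffine

lemma IsLocallyAffineAt.symm {e : Equiv.Perm ℝ} {y : ℝ} (h : IsLocallyAffineAt e (e.symm y))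
    (hc : ContinuousAt e.symm y) : IsLocallyAffineAt e.symm y := by
  obtain ⟨a, b, hab⟩ := h
  have ha : a ≠ 0 := by
    rintro rfl
    obtain ⟨z, hz, hzy⟩ := ((hab.filter_mono (nhdsWithin_le_nhds (s := {e.symm y}ᶜ))).and
      self_mem_nhdsWithin).exists
    exact hzy (e.injective (by rw [hz, hab.self_of_nhds, zero_mul, zero_mul]))
  refine ⟨a⁻¹, -b / a, ?_⟩
  filter_upwards [hc.eventually hab] with z hz
  rw [Equiv.apply_symm_apply] at hz
  field_simp
  linarith

lemma inPL_iff {f : Equiv.Perm ℝ} :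
    InPL f ↔ IsHomeo f ∧ ∀ᶠ x in codiscrete ℝ, IsLocallyAffineAt f x := by
  rw [InPL, Filter.Eventually, mem_codiscrete_accPt, compl_ofPred]

def PL : Subgroup (Equiv.Perm ℝ) where
  carrier := {f | InPL f}
  one_mem' := inPL_iff.2 ⟨⟨continuous_id, continuous_id⟩,
    .of_forall fun x => ⟨1, 0, .of_forall fun y => by simp⟩⟩
  mul_mem' {f g} hf hg := by
    obtain ⟨⟨hfc, hfc'⟩, hfa⟩ := inPL_iff.1 hf
    obtain ⟨⟨hgc, hgc'⟩, hga⟩ := inPL_iff.1 hg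
    refine inPL_iff.2 ⟨⟨hfc.comp hgc, hgc'.comp hfc'⟩, ?_⟩
    filter_upwards [hga, (hgc.tendsto_codiscrete g.injective).eventually hfa] with x h1 h2
    exact h2.comp h1
  inv_mem' {f} hf := by
    obtain ⟨⟨hfc, hfc'⟩, hfa⟩ := inPL_iff.1 hf
    refine inPL_iff.2 ⟨⟨hfc', hfc⟩, ?_⟩
    filter_upwards [(hfc'.tendsto_codiscrete f.symm.injective).eventually hfa] with y hy
    exact hy.symm hfc'.continuousAt

def PLPlus : Subgroup (Equiv.Perm ℝ) where
  carrier := {f | f ∈ PL ∧ StrictMono f}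
  one_mem' := ⟨PL.one_mem, strictMono_id⟩
  mul_mem' hf hg := ⟨PL.mul_mem hf.1 hg.1, hf.2.comp hg.2⟩
  inv_mem' {f} hf := ⟨PL.inv_mem hf.1, fun a b h => hf.2.lt_iff_lt.1 (by simpa using h)⟩

lemma mem_PLPlus {f : Equiv.Perm ℝ} : f ∈ PLPlus ↔ InPL f ∧ StrictMono f := Iff.rfl

lemma mem_PL_of_isLocallyAffineAt {f : Equiv.Perm ℝ} (hf : IsHomeo f)
    (h : ∀ x, IsLocallyAffineAt f x) : f ∈ PL :=
  inPL_iff.2 ⟨hf, .of_forall h⟩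

lemma addRight_mem_PLPlus (c : ℝ) : Equiv.addRight c ∈ PLPlus :=
  ⟨mem_PL_of_isLocallyAffineAt ⟨continuous_add_const c, by simpa using continuous_add_const (-c)⟩
    fun _ => ⟨1, c, .of_forall fun y => by simp⟩, add_left_strictMono⟩

lemma mulLeft₀_mem_PLPlus {a : ℝ} (ha : 0 < a) : Equiv.mulLeft₀ a ha.ne' ∈ PLPlus :=
  ⟨mem_PL_of_isLocallyAffineAt ⟨continuous_const_mul a, by simpa using continuous_const_mul a⁻¹⟩
    fun _ => ⟨a, 0, .of_forall fun y => by simp⟩, strictMono_mul_left_of_pos ha⟩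

lemma neg_mem_PL : Equiv.neg ℝ ∈ PL :=
  mem_PL_of_isLocallyAffineAt ⟨continuous_neg, continuous_neg⟩
    fun _ => ⟨-1, 0, .of_forall fun y => by simp⟩

lemma neg_conj_mem_PLPlus {k : Equiv.Perm ℝ} (hk : k ∈ PLPlus) :
    Equiv.neg ℝ * k * (Equiv.neg ℝ)⁻¹ ∈ PLPlus :=
  ⟨PL.mul_mem (PL.mul_mem neg_mem_PL hk.1) (PL.inv_mem neg_mem_PL),
    fun a b h => by simpa using hk.2 (neg_lt_neg h)⟩

noncomputable def permOfStrictMono (g : ℝ → ℝ) (hmono : StrictMono g) (hsurj : Surjective g) :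
    Equiv.Perm ℝ :=
  (hmono.orderIsoOfSurjective g hsurj).toEquiv

lemma permOfStrictMono_mem_PLPlus {g : ℝ → ℝ} (hmono : StrictMono g) (hsurj : Surjective g)
    (haff : ∀ᶠ x in codiscrete ℝ, IsLocallyAffineAt g x) :
    permOfStrictMono g hmono hsurj ∈ PLPlus :=
  ⟨inPL_iff.2 ⟨⟨(hmono.orderIsoOfSurjective g hsurj).toHomeomorph.continuous,
    (hmono.orderIsoOfSurjective g hsurj).toHomeomorph.symm.continuous⟩, haff⟩, hmono⟩

section Reversible

variable {G : Type*} [Group G]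

def IsReversibleIn (H : Subgroup G) (g : G) : Prop :=
  ∃ k ∈ H, k * g * k⁻¹ = g⁻¹

lemma conj_reverses_conj {k g : G} (c : G) (h : k * g * k⁻¹ = g⁻¹) :
    (c * k * c⁻¹) * (c * g * c⁻¹) * (c * k * c⁻¹)⁻¹ = (c * g * c⁻¹)⁻¹ := by
  calc (c * k * c⁻¹) * (c * g * c⁻¹) * (c * k * c⁻¹)⁻¹ = c * (k * g * k⁻¹) * c⁻¹ := by group
    _ = (c * g * c⁻¹)⁻¹ := by rw [h]; group

lemma reverses_inv {k g : G} (h : k * g * k⁻¹ = g⁻¹) : k * g⁻¹ * k⁻¹ = g⁻¹⁻¹ := by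
  calc k * g⁻¹ * k⁻¹ = (k * g * k⁻¹)⁻¹ := by group
    _ = g⁻¹⁻¹ := by rw [h]

namespace IsReversibleIn

variable {H : Subgroup G} {g : G}

lemma conj (hg : IsReversibleIn H g) {c : G} (hc : c ∈ H) : IsReversibleIn H (c * g * c⁻¹) :=
  let ⟨k, hk, h⟩ := hg
  ⟨c * k * c⁻¹, H.mul_mem (H.mul_mem hc hk) (H.inv_mem hc), conj_reverses_conj c h⟩

lemma inv (hg : IsReversibleIn H g) : IsReversibleIn H g⁻¹ :=
  let ⟨k, hk, h⟩ := hg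
  ⟨k, hk, reverses_inv h⟩

end IsReversibleIn

end Reversible

noncomputable def glue (F : ℤ → ℝ → ℝ) (x : ℝ) : ℝ :=
  F ⌊x⌋ (Int.fract x)

section Glue

variable {F : ℤ → ℝ → ℝ}

lemma glue_of_mem_Ico {n : ℤ} {x : ℝ} (h : x - n ∈ Ico 0 1) : glue F x = F n (x - n) := by
  have hn : ⌊x⌋ = n := Int.floor_eq_iff.2 ⟨by linarith [h.1], by linarith [h.2]⟩
  rw [glue, Int.fract, hn]

lemma glue_of_mem_Icc (hF : ∀ n, F n 1 = F (n + 1) 0) {n : ℤ} {x : ℝ} (h : x - n ∈ Icc 0 1) :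
    glue F x = F n (x - n) := by
  rcases h.2.lt_or_eq with h₁ | h₁
  · exact glue_of_mem_Ico ⟨h.1, h₁⟩
  · rw [h₁, hF, glue_of_mem_Ico (n := n + 1) (by push_cast; constructor <;> linarith)]
    push_cast
    congr 1
    linarith

lemma glue_add_one (x : ℝ) : glue F (x + 1) = F (⌊x⌋ + 1) (Int.fract x) := by
  rw [glue, Int.floor_add_one, Int.fract_add_one]

lemma isLocallyAffineAt_glue {m : ℤ} {z : ℝ} (hz : z ∈ Ioo (m : ℝ) (m + 1))
    (h : IsLocallyAffineAt (F m) (z - m)) : IsLocallyAffineAt (glue F) z := by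
  refine (h.comp (g := fun y => y - m) ⟨1, -m, .of_forall fun y => by ring⟩).congr ?_
  filter_upwards [Ioo_mem_nhds hz.1 hz.2] with y hy
  exact (glue_of_mem_Ico ⟨by linarith [hy.1], by linarith [hy.2]⟩).symm

lemma glue_strictMono (hmono : ∀ n, StrictMonoOn (F n) (Icc 0 1))
    (hF : ∀ n, F n 1 = F (n + 1) 0) : StrictMono (glue F) := by
  have hseq : StrictMono fun n => F n 0 := strictMono_int_of_lt_succ fun n =>
    hF n ▸ hmono n (left_mem_Icc.2 zero_le_one) (right_mem_Icc.2 zero_le_one) zero_lt_one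
  have hfract (x : ℝ) : Int.fract x ∈ Icc 0 1 := ⟨Int.fract_nonneg x, (Int.fract_lt_one x).le⟩
  intro x y hxy
  rcases (Int.floor_le_floor hxy.le).eq_or_lt with h | h
  · rw [glue, glue, ← h]
    refine hmono ⌊x⌋ (hfract x) (hfract y) ?_
    rw [Int.fract, Int.fract, h]
    linarith
  · calc glue F x < F ⌊x⌋ 1 :=
          hmono _ (hfract x) (right_mem_Icc.2 zero_le_one) (Int.fract_lt_one x)
      _ = F (⌊x⌋ + 1) 0 := hF _
      _ ≤ F ⌊y⌋ 0 := hseq.monotone h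
      _ ≤ glue F y :=
          (hmono _).monotoneOn (left_mem_Icc.2 zero_le_one) (hfract y) (Int.fract_nonneg y)

lemma glue_surjective (hcover : ∀ y, ∃ n : ℤ, F n 0 ≤ y ∧ y < F n 1)
    (himage : ∀ n, Ico (F n 0) (F n 1) ⊆ F n '' Ico 0 1) : Surjective (glue F) := by
  intro y
  obtain ⟨n, hn⟩ := hcover y
  obtain ⟨t, ht, rfl⟩ := himage n hn
  refine ⟨n + t, ?_⟩
  rw [glue_of_mem_Ico (n := n) (by simpa using ht), add_sub_cancel_left]

lemma eventually_isLocallyAffineAt_glue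
    (hF : ∀ n, ∀ᶠ t in codiscrete ℝ, IsLocallyAffineAt (F n) t) :
    ∀ᶠ x in codiscrete ℝ, IsLocallyAffineAt (glue F) x := by
  rw [eventually_codiscrete_iff]
  intro x
  set n := ⌊x⌋
  have hshift (m : ℤ) : ∀ᶠ z in 𝓝[≠] x, IsLocallyAffineAt (F m) (z - m) :=
    eventually_codiscrete_iff.1 (((continuous_sub_right (m : ℝ)).tendsto_codiscrete
      (sub_left_injective)).eventually (hF m)) x
  have hne : ∀ᶠ z in 𝓝[≠] x, z ≠ (n : ℝ) :=
    eventually_codiscrete_iff.1 (compl_singleton_mem_codiscreteWithin (n : ℝ)) x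
  have hnear : ∀ᶠ z in 𝓝 x, z ∈ Ioo ((n : ℝ) - 1) (n + 1) :=
    Ioo_mem_nhds (by linarith [Int.floor_le x]) (Int.lt_floor_add_one x)
  filter_upwards [hshift (n - 1), hshift n, hne, nhdsWithin_le_nhds hnear] with z h₁ h₂ hzn hz
  rcases hzn.lt_or_gt with hlt | hgt
  · exact isLocallyAffineAt_glue (m := n - 1) ⟨by push_cast; linarith [hz.1], by simpa⟩ h₁
  · exact isLocallyAffineAt_glue ⟨hgt, hz.2⟩ h₂

end Glue

noncomputable def periodicLift (S : ℝ → ℝ) : ℝ → ℝ :=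
  glue fun n t => n + S t

section PeriodicLift

variable {S : ℝ → ℝ}

lemma periodicLift_of_mem_Icc (hper : S 1 = S 0 + 1) {n : ℤ} {x : ℝ} (h : x - n ∈ Icc 0 1) :
    periodicLift S x = n + S (x - n) :=
  glue_of_mem_Icc (fun n => by push_cast; rw [hper]; ring) h

lemma periodicLift_add_one (x : ℝ) : periodicLift S (x + 1) = periodicLift S x + 1 := by
  rw [periodicLift, glue_add_one, glue]
  push_cast
  ring

lemma periodicLift_strictMono (hS : StrictMono S) (hper : S 1 = S 0 + 1) :
    StrictMono (periodicLift S) :=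
  glue_strictMono (fun n => (hS.const_add (n : ℝ)).strictMonoOn _)
    (fun n => by push_cast; rw [hper]; ring)

lemma periodicLift_surjective (hS : Continuous S) (hper : S 1 = S 0 + 1) :
    Surjective (periodicLift S) := by
  refine glue_surjective (fun y => ⟨⌊y - S 0⌋, ?_, ?_⟩) fun n =>
    intermediate_value_Ico zero_le_one (continuous_const.add hS).continuousOn
  · linarith [Int.floor_le (y - S 0)]
  · linarith [Int.lt_floor_add_one (y - S 0)]

lemma eventually_isLocallyAffineAt_periodicLift
    (hS : ∀ᶠ t in codiscrete ℝ, IsLocallyAffineAt S t) :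
    ∀ᶠ x in codiscrete ℝ, IsLocallyAffineAt (periodicLift S) x :=
  eventually_isLocallyAffineAt_glue fun n => hS.mono fun _ ⟨a, b, hab⟩ =>
    ⟨a, n + b, hab.mono fun y hy => by simp only [hy]; ring⟩

end PeriodicLift

lemma eventually_isLocallyAffineAt_of_pieces {f : ℝ → ℝ} {p q a₁ b₁ a₂ b₂ a₃ b₃ : ℝ}
    (h₁ : ∀ t ≤ p, f t = a₁ * t + b₁) (h₂ : ∀ t ∈ Icc p q, f t = a₂ * t + b₂)
    (h₃ : ∀ t ≥ q, f t = a₃ * t + b₃) : ∀ᶠ t in codiscrete ℝ, IsLocallyAffineAt f t := by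
  filter_upwards [(toFinite {p, q}).compl_mem_codiscrete] with t ht
  simp only [mem_compl_iff, mem_insert_iff, mem_singleton_iff, not_or] at ht
  rcases lt_or_gt_of_ne ht.1 with htp | htp
  · exact ⟨a₁, b₁, eventually_of_mem (Iio_mem_nhds htp) fun y hy => h₁ y hy.le⟩
  rcases lt_or_gt_of_ne ht.2 with htq | htq
  · exact ⟨a₂, b₂, eventually_of_mem (Ioo_mem_nhds htp htq) fun y hy =>
      h₂ y ⟨hy.1.le, hy.2.le⟩⟩
  · exact ⟨a₃, b₃, eventually_of_mem (Ioi_mem_nhds htq) fun y hy => h₃ y hy.le⟩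

noncomputable def gProfile (t : ℝ) : ℝ :=
  min (max (t / 2 + 1 / 8) (2 * t - 3 / 8)) (t / 2 + 5 / 8)

noncomputable def kProfile (t : ℝ) : ℝ :=
  min (max (t / 7 + 19 / 56) (7 * t - 11 / 8)) (t / 7 + 67 / 56)

section Profiles

variable {t : ℝ}

lemma gProfile_of_le (h : t ≤ 1 / 3) : gProfile t = t / 2 + 1 / 8 := by
  rw [gProfile, max_eq_left (by linarith), min_eq_left (by linarith)]

lemma gProfile_of_mem (h : t ∈ Icc (1 / 3) (2 / 3)) : gProfile t = 2 * t - 3 / 8 := by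
  rw [gProfile, max_eq_right (by linarith [h.1]), min_eq_left (by linarith [h.2])]

lemma gProfile_of_ge (h : 2 / 3 ≤ t) : gProfile t = t / 2 + 5 / 8 := by
  rw [gProfile, max_eq_right (by linarith), min_eq_right (by linarith)]

lemma kProfile_of_le (h : t ≤ 1 / 4) : kProfile t = t / 7 + 19 / 56 := by
  rw [kProfile, max_eq_left (by linarith), min_eq_left (by linarith)]

lemma kProfile_of_mem (h : t ∈ Icc (1 / 4) (3 / 8)) : kProfile t = 7 * t - 11 / 8 := by
  rw [kProfile, max_eq_right (by linarith [h.1]), min_eq_left (by linarith [h.2])]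

lemma kProfile_of_ge (h : 3 / 8 ≤ t) : kProfile t = t / 7 + 67 / 56 := by
  rw [kProfile, max_eq_right (by linarith), min_eq_right (by linarith)]

end Profiles

lemma gProfile_strictMono : StrictMono gProfile := fun a b h =>
  min_lt_min (max_lt_max (by linarith) (by linarith)) (by linarith)

lemma kProfile_strictMono : StrictMono kProfile := fun a b h =>
  min_lt_min (max_lt_max (by linarith) (by linarith)) (by linarith)

lemma gProfile_continuous : Continuous gProfile := by
  unfold gProfile
  fun_prop

lemma kProfile_continuous : Continuous kProfile := by
  unfold kProfile
  fun_prop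

lemma gProfile_one : gProfile 1 = gProfile 0 + 1 := by
  rw [gProfile_of_ge (by norm_num), gProfile_of_le (by norm_num)]
  norm_num

lemma kProfile_one : kProfile 1 = kProfile 0 + 1 := by
  rw [kProfile_of_ge (by norm_num), kProfile_of_le (by norm_num)]
  norm_num

lemma eventually_isLocallyAffineAt_gProfile :
    ∀ᶠ t in codiscrete ℝ, IsLocallyAffineAt gProfile t :=
  eventually_isLocallyAffineAt_of_pieces (a₁ := 1 / 2) (b₁ := 1 / 8) (a₃ := 1 / 2) (b₃ := 5 / 8)
    (fun t ht => by rw [gProfile_of_le ht]; ring) (fun t ht => gProfile_of_mem ht)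
    (fun t ht => by rw [gProfile_of_ge ht]; ring)

lemma eventually_isLocallyAffineAt_kProfile :
    ∀ᶠ t in codiscrete ℝ, IsLocallyAffineAt kProfile t :=
  eventually_isLocallyAffineAt_of_pieces (a₁ := 1 / 7) (b₁ := 19 / 56) (a₃ := 1 / 7)
    (b₃ := 67 / 56)
    (fun t ht => by rw [kProfile_of_le ht]; ring) (fun t ht => kProfile_of_mem ht)
    (fun t ht => by rw [kProfile_of_ge ht]; ring)

noncomputable def modelG : Equiv.Perm ℝ :=
  permOfStrictMono (periodicLift gProfile)
    (periodicLift_strictMono gProfile_strictMono gProfile_one)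
    (periodicLift_surjective gProfile_continuous gProfile_one)

noncomputable def modelK : Equiv.Perm ℝ :=
  permOfStrictMono (periodicLift kProfile)
    (periodicLift_strictMono kProfile_strictMono kProfile_one)
    (periodicLift_surjective kProfile_continuous kProfile_one)

lemma modelG_mem_PLPlus : modelG ∈ PLPlus :=
  permOfStrictMono_mem_PLPlus _ _
    (eventually_isLocallyAffineAt_periodicLift eventually_isLocallyAffineAt_gProfile)

lemma modelK_mem_PLPlus : modelK ∈ PLPlus :=
  permOfStrictMono_mem_PLPlus _ _
    (eventually_isLocallyAffineAt_periodicLift eventually_isLocallyAffineAt_kProfile)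

lemma modelG_add_one (x : ℝ) : modelG (x + 1) = modelG x + 1 :=
  periodicLift_add_one x

lemma modelK_add_one (x : ℝ) : modelK (x + 1) = modelK x + 1 :=
  periodicLift_add_one x

section Pieces

variable (n : ℤ) {x : ℝ}

lemma modelG_eq_flat (h₀ : (n : ℝ) - 1 / 3 ≤ x) (h₁ : x ≤ n + 1 / 3) :
    modelG x = x / 2 + n / 2 + 1 / 8 := by
  change periodicLift gProfile x = _
  rcases le_total x n with hx | hx
  · rw [periodicLift_of_mem_Icc gProfile_one (n := n - 1) (by push_cast; constructor <;> linarith),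
      gProfile_of_ge (by push_cast; linarith)]
    push_cast
    ring
  · rw [periodicLift_of_mem_Icc gProfile_one (n := n) (by constructor <;> linarith),
      gProfile_of_le (by linarith)]
    ring

lemma modelG_eq_steep (h₀ : (n : ℝ) + 1 / 3 ≤ x) (h₁ : x ≤ n + 2 / 3) :
    modelG x = 2 * x - n - 3 / 8 := by
  change periodicLift gProfile x = _
  rw [periodicLift_of_mem_Icc gProfile_one (n := n) (by constructor <;> linarith),
    gProfile_of_mem (by constructor <;> linarith)]
  ring

lemma modelK_eq_flat (h₀ : (n : ℝ) - 5 / 8 ≤ x) (h₁ : x ≤ n + 1 / 4) :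
    modelK x = x / 7 + 6 * n / 7 + 19 / 56 := by
  change periodicLift kProfile x = _
  rcases le_total x n with hx | hx
  · rw [periodicLift_of_mem_Icc kProfile_one (n := n - 1) (by push_cast; constructor <;> linarith),
      kProfile_of_ge (by push_cast; linarith)]
    push_cast
    ring
  · rw [periodicLift_of_mem_Icc kProfile_one (n := n) (by constructor <;> linarith),
      kProfile_of_le (by linarith)]
    ring

lemma modelK_eq_steep (h₀ : (n : ℝ) + 1 / 4 ≤ x) (h₁ : x ≤ n + 3 / 8) :
    modelK x = 7 * x - 6 * n - 11 / 8 := by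
  change periodicLift kProfile x = _
  rw [periodicLift_of_mem_Icc kProfile_one (n := n) (by constructor <;> linarith),
    kProfile_of_mem (by constructor <;> linarith)]
  ring

end Pieces

-- The cut points are chosen so that in each case every intermediate value stays within a
-- single affine piece of `modelG` or `modelK`.
lemma modelG_modelK_modelG_of_mem_Icc {x : ℝ} (hx : x ∈ Icc 0 1) :
    modelG (modelK (modelG x)) = modelK x := by
  obtain ⟨h₀, h₁⟩ := hx
  rcases le_total x (1 / 4) with h₂ | h₂
  · rw [modelG_eq_flat 0 (x := x), modelK_eq_flat 0, modelG_eq_steep 0, modelK_eq_flat 0] <;>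
      push_cast <;> linarith
  rcases le_total x (1 / 3) with h₃ | h₃
  · rw [modelG_eq_flat 0 (x := x), modelK_eq_steep 0, modelG_eq_steep 0, modelK_eq_steep 0] <;>
      push_cast <;> linarith
  rcases le_total x (3 / 8) with h₄ | h₄
  · rw [modelG_eq_steep 0 (x := x), modelK_eq_steep 0, modelG_eq_flat 1, modelK_eq_steep 0] <;>
      push_cast <;> linarith
  rcases le_total x (2 / 3) with h₅ | h₅
  · rw [modelG_eq_steep 0 (x := x), modelK_eq_flat 1, modelG_eq_flat 1, modelK_eq_flat 1] <;>
      push_cast <;> linarith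
  · rw [modelG_eq_flat 1 (x := x), modelK_eq_flat 1, modelG_eq_steep 1, modelK_eq_flat 1] <;>
      push_cast <;> linarith

lemma modelG_neg_of_mem_Icc {x : ℝ} (hx : x ∈ Icc 0 1) : modelG (-x) = 1 / 4 - modelG x := by
  obtain ⟨h₀, h₁⟩ := hx
  rcases le_total x (1 / 3) with h₂ | h₂
  · rw [modelG_eq_flat 0 (x := -x), modelG_eq_flat 0 (x := x)] <;> push_cast <;> linarith
  rcases le_total x (2 / 3) with h₃ | h₃
  · rw [modelG_eq_steep (-1) (x := -x), modelG_eq_steep 0 (x := x)] <;> push_cast <;> linarith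
  · rw [modelG_eq_flat (-1) (x := -x), modelG_eq_flat 1 (x := x)] <;> push_cast <;> linarith

lemma modelG_modelK_modelG (x : ℝ) : modelG (modelK (modelG x)) = modelK x := by
  have hper : Periodic (fun x => modelG (modelK (modelG x)) - modelK x) 1 := fun x => by
    simp only [modelG_add_one, modelK_add_one]
    ring
  obtain ⟨y, hy, hxy⟩ := hper.exists_mem_Ico₀ zero_lt_one x
  have := modelG_modelK_modelG_of_mem_Icc (Ico_subset_Icc_self hy)
  linarith

lemma modelG_neg (x : ℝ) : modelG (-x) = 1 / 4 - modelG x := by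
  have hper : Periodic (fun x => modelG (-x) + modelG x) 1 := fun x => by
    have h := modelG_add_one (-(x + 1))
    rw [show -(x + 1) + 1 = -x by ring] at h
    simp only [modelG_add_one]
    linarith
  obtain ⟨y, hy, hxy⟩ := hper.exists_mem_Ico₀ zero_lt_one x
  have := modelG_neg_of_mem_Icc (Ico_subset_Icc_self hy)
  linarith

lemma modelK_conj_modelG : modelK * modelG * modelK⁻¹ = modelG⁻¹ := by
  have h : modelG * modelK * modelG = modelK := Equiv.ext modelG_modelK_modelG
  calc modelK * modelG * modelK⁻¹ = modelG⁻¹ * (modelG * modelK * modelG) * modelK⁻¹ := by group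
    _ = modelG⁻¹ := by rw [h]; group

lemma neg_conj_modelG :
    Equiv.neg ℝ * modelG * (Equiv.neg ℝ)⁻¹ = (Equiv.addRight (1 / 4 : ℝ))⁻¹ * modelG := by
  ext x
  simp [modelG_neg, sub_eq_add_neg]

lemma modelG_inv_mul_addRight :
    modelG⁻¹ * Equiv.addRight (1 / 4 : ℝ) = Equiv.neg ℝ * modelG⁻¹ * (Equiv.neg ℝ)⁻¹ :=
  calc modelG⁻¹ * Equiv.addRight (1 / 4 : ℝ) = ((Equiv.addRight (1 / 4 : ℝ))⁻¹ * modelG)⁻¹ := by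
        group
    _ = Equiv.neg ℝ * modelG⁻¹ * (Equiv.neg ℝ)⁻¹ := by rw [← neg_conj_modelG]; group

lemma exists_reversible_mul_eq_addRight :
    ∃ g h, g ∈ PLPlus ∧ h ∈ PLPlus ∧ IsReversibleIn PLPlus g ∧ IsReversibleIn PLPlus h ∧
      g * h = Equiv.addRight (1 / 4 : ℝ) := by
  refine ⟨modelG, _, modelG_mem_PLPlus,
    PLPlus.mul_mem (PLPlus.inv_mem modelG_mem_PLPlus) (addRight_mem_PLPlus _),
    ⟨modelK, modelK_mem_PLPlus, modelK_conj_modelG⟩, ?_, mul_inv_cancel_left _ _⟩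
  rw [modelG_inv_mul_addRight]
  exact ⟨_, neg_conj_mem_PLPlus modelK_mem_PLPlus,
    conj_reverses_conj _ (reverses_inv modelK_conj_modelG)⟩

lemma apply_eq_of_tendsto_orbit {X : Type*} [TopologicalSpace X] [T2Space X] {f : X → X}
    {e : ℤ → X} (he : ∀ n, e (n + 1) = f (e n)) {l : Filter ℤ} [l.NeBot]
    (hl : Tendsto (· + 1) l l) {y : X} (hy : Tendsto e l (𝓝 y)) (hf : ContinuousAt f y) :
    f y = y :=
  tendsto_nhds_unique (hf.tendsto.comp hy) (by simpa [comp_def, he] using hy.comp hl)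

lemma exists_le_lt_succ {α : Type*} [LinearOrder α] [NoMaxOrder α] {e : ℤ → α}
    (htop : Tendsto e atTop atTop) (hbot : Tendsto e atBot atBot) (y : α) :
    ∃ n, e n ≤ y ∧ y < e (n + 1) := by
  obtain ⟨m, hm⟩ := eventually_atTop.1 (htop.eventually_gt_atTop y)
  obtain ⟨l, hl⟩ := (hbot.eventually_le_atBot y).exists
  obtain ⟨n, hn, hmax⟩ := Int.exists_greatest_of_bdd
    ⟨m, fun k (hk : e k ≤ y) => le_of_not_gt fun hlt => (hm k hlt.le).not_ge hk⟩ ⟨l, hl⟩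
  exact ⟨n, hn, lt_of_not_ge fun h => (hmax (n + 1) h).not_gt (lt_add_one n)⟩

lemma Ico_subset_image_of_strictMono {α : Type*} [LinearOrder α] {P : Equiv.Perm α}
    (hP : StrictMono P) (a b : α) :
    Ico (P a) (P b) ⊆ P '' Ico a b := fun y hy =>
  ⟨P.symm y, ⟨hP.le_iff_le.1 (by simpa using hy.1), hP.lt_iff_lt.1 (by simpa using hy.2)⟩,
    P.apply_symm_apply y⟩

section Orbit

variable {f : Equiv.Perm ℝ}

lemma orbit_succ (n : ℤ) : (f ^ (n + 1)) 0 = f ((f ^ n) 0) := by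
  rw [add_comm, zpow_one_add, Equiv.Perm.mul_apply]

lemma strictMono_orbit (hfx : ∀ x, x < f x) : StrictMono fun n : ℤ => (f ^ n) 0 :=
  strictMono_int_of_lt_succ fun n => (orbit_succ n).symm ▸ hfx _

lemma tendsto_orbit_atTop (hf : Continuous f) (hfx : ∀ x, x < f x) :
    Tendsto (fun n : ℤ => (f ^ n) 0) atTop atTop :=
  (tendsto_atTop_of_monotone (strictMono_orbit hfx).monotone).resolve_right fun ⟨y, hy⟩ =>
    (hfx y).ne' (apply_eq_of_tendsto_orbit orbit_succ
      (tendsto_atTop_add_const_right _ 1 tendsto_id) hy hf.continuousAt)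

lemma tendsto_orbit_atBot (hf : Continuous f) (hfx : ∀ x, x < f x) :
    Tendsto (fun n : ℤ => (f ^ n) 0) atBot atBot :=
  (tendsto_atBot_of_monotone (strictMono_orbit hfx).monotone).resolve_right fun ⟨y, hy⟩ =>
    (hfx y).ne' (apply_eq_of_tendsto_orbit orbit_succ
      (tendsto_atBot_add_const_right _ 1 tendsto_id) hy hf.continuousAt)

end Orbit

noncomputable def orbitGlue (f : Equiv.Perm ℝ) : ℝ → ℝ :=
  glue fun n t => (f ^ n) (f 0 * t)

section OrbitGlue

variable {f : Equiv.Perm ℝ}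

lemma orbitGlue_add_one (x : ℝ) : orbitGlue f (x + 1) = f (orbitGlue f x) := by
  rw [orbitGlue, glue_add_one, glue, add_comm, zpow_one_add, Equiv.Perm.mul_apply]

lemma strictMono_orbitGlue_piece (hf : f ∈ PLPlus) (hf0 : 0 < f 0) (n : ℤ) :
    StrictMono fun t => (f ^ n) (f 0 * t) :=
  (PLPlus.zpow_mem hf n).2.comp (strictMono_mul_left_of_pos hf0)

lemma orbitGlue_strictMono (hf : f ∈ PLPlus) (hf0 : 0 < f 0) : StrictMono (orbitGlue f) :=
  glue_strictMono (fun n => (strictMono_orbitGlue_piece hf hf0 n).strictMonoOn _) fun n => by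
    rw [mul_one, mul_zero, zpow_add_one, Equiv.Perm.mul_apply]

lemma orbitGlue_surjective (hf : f ∈ PLPlus) (hfx : ∀ x, x < f x) :
    Surjective (orbitGlue f) := by
  have hc := (inPL_iff.1 hf.1).1.1
  refine glue_surjective (fun y => ?_) fun n => ?_
  · simpa [zpow_add_one] using
      exists_le_lt_succ (tendsto_orbit_atTop hc hfx) (tendsto_orbit_atBot hc hfx) y
  · exact Ico_subset_image_of_strictMono (P := f ^ n * Equiv.mulLeft₀ (f 0) (hfx 0).ne')
      (strictMono_orbitGlue_piece hf (hfx 0) n) 0 1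

end OrbitGlue

lemma eventually_isLocallyAffineAt_orbitGlue {f : Equiv.Perm ℝ} (hf : f ∈ PLPlus)
    (hf0 : 0 < f 0) : ∀ᶠ x in codiscrete ℝ, IsLocallyAffineAt (orbitGlue f) x :=
  eventually_isLocallyAffineAt_glue fun n =>
    (inPL_iff.1 (PLPlus.mul_mem (PLPlus.zpow_mem hf n) (mulLeft₀_mem_PLPlus hf0)).1).2

lemma exists_conj_addRight {f : Equiv.Perm ℝ} (hf : f ∈ PLPlus) (hfx : ∀ x, x < f x) {c : ℝ}
    (hc : 0 < c) : ∃ w ∈ PLPlus, f = w * Equiv.addRight c * w⁻¹ := by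
  set V := permOfStrictMono (orbitGlue f) (orbitGlue_strictMono hf (hfx 0))
    (orbitGlue_surjective hf hfx)
  have hV : V ∈ PLPlus :=
    permOfStrictMono_mem_PLPlus _ _ (eventually_isLocallyAffineAt_orbitGlue hf (hfx 0))
  refine ⟨V * Equiv.mulLeft₀ c⁻¹ (inv_ne_zero hc.ne'),
    PLPlus.mul_mem hV (mulLeft₀_mem_PLPlus (inv_pos.2 hc)), ?_⟩
  rw [eq_mul_inv_iff_mul_eq]
  ext x
  show f (orbitGlue f (c⁻¹ * x)) = orbitGlue f (c⁻¹ * (x + c))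
  rw [mul_add, inv_mul_cancel₀ hc.ne', orbitGlue_add_one]

lemma exists_reversible_mul_eq_of_lt {f : Equiv.Perm ℝ} (hf : f ∈ PLPlus) (hfx : ∀ x, x < f x) :
    ∃ g h, g ∈ PLPlus ∧ h ∈ PLPlus ∧ IsReversibleIn PLPlus g ∧ IsReversibleIn PLPlus h ∧
      f = g * h := by
  obtain ⟨w, hw, rfl⟩ := exists_conj_addRight hf hfx (c := 1 / 4) (by norm_num)
  obtain ⟨g, h, hg, hh, hgr, hhr, hgh⟩ := exists_reversible_mul_eq_addRight
  have hconj {k : Equiv.Perm ℝ} (hk : k ∈ PLPlus) : w * k * w⁻¹ ∈ PLPlus :=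
    PLPlus.mul_mem (PLPlus.mul_mem hw hk) (PLPlus.inv_mem hw)
  refine ⟨w * g * w⁻¹, w * h * w⁻¹, hconj hg, hconj hh, hgr.conj hw, hhr.conj hw, ?_⟩
  rw [← hgh]
  group

lemma forall_lt_or_forall_gt_of_forall_ne {f : ℝ → ℝ} (hf : Continuous f)
    (hfp : ∀ x, f x ≠ x) : (∀ x, x < f x) ∨ ∀ x, f x < x := by
  by_contra! h
  obtain ⟨⟨a, ha⟩, b, hb⟩ := h
  obtain ⟨c, hc⟩ := intermediate_value_univ a b (hf.sub continuous_id)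
    ⟨sub_nonpos.2 ha, sub_nonneg.2 hb⟩
  exact hfp c (sub_eq_zero.1 hc)

lemma exists_reversible_mul_eq {f : Equiv.Perm ℝ} (hf : f ∈ PLPlus) (hfp : ∀ x, f x ≠ x) :
    ∃ g h, g ∈ PLPlus ∧ h ∈ PLPlus ∧ IsReversibleIn PLPlus g ∧ IsReversibleIn PLPlus h ∧
      f = g * h := by
  rcases forall_lt_or_forall_gt_of_forall_ne (inPL_iff.1 hf.1).1.1 hfp with hlt | hgt
  · exact exists_reversible_mul_eq_of_lt hf hlt
  · obtain ⟨g, h, hg, hh, hgr, hhr, hgh⟩ :=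
      exists_reversible_mul_eq_of_lt (PLPlus.inv_mem hf) fun x => by simpa using hgt (f⁻¹ x)
    exact ⟨h⁻¹, g⁻¹, PLPlus.inv_mem hh, PLPlus.inv_mem hg, hhr.inv, hgr.inv,
      by rw [← inv_inv f, hgh, mul_inv_rev]⟩

/-- Every fixed point free element of PL⁺(ℝ) is a composite of two elements of PL⁺(ℝ),
each reversible in PL⁺(ℝ). -/
theorem stmt_16 (f : Equiv.Perm ℝ) (hf : InPL f) (hfm : StrictMono (⇑f))
    (hfp : ∀ x : ℝ, f x ≠ x) :
    ∃ g h : Equiv.Perm ℝ, InPL g ∧ StrictMono (⇑g) ∧ InPL h ∧ StrictMono (⇑h) ∧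
      (∃ k : Equiv.Perm ℝ, InPL k ∧ StrictMono (⇑k) ∧ k * g * k⁻¹ = g⁻¹) ∧
      (∃ k : Equiv.Perm ℝ, InPL k ∧ StrictMono (⇑k) ∧ k * h * k⁻¹ = h⁻¹) ∧
      f = g * h := by
  obtain ⟨g, h, hg, hh, ⟨k, hk, hkg⟩, ⟨l, hl, hlh⟩, hgh⟩ :=
    exists_reversible_mul_eq (mem_PLPlus.2 ⟨hf, hfm⟩) hfp
  exact ⟨g, h, hg.1, hg.2, hh.1, hh.2, ⟨k, hk.1, hk.2, hkg⟩, ⟨l, hl.1, hl.2, hlh⟩, hgh⟩
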